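/- Let ν be a positive Borel measure supported on [0,1]. Then for every z in the unit disc 𝔻, |∫₀¹ dν(r)/(1−rz)| ≥ (1/√2)·∫₀¹ dν(r)/|1−rz|. -/

import Mathlib

/-!
For `r ∈ [0,1]` and `z ∈ 𝔻` the value `(1 - r z)⁻¹` has nonnegative real part and imaginary
part of the sign of `Im z`, so the integrand takes values in a single closed quadrant. On the
first quadrant `‖w‖ ≤ Re w + Im w`, and the right-hand side is additive, so
`∫ ‖f‖ ≤ Re ∫ f + Im ∫ f ≤ √2 ‖∫ f‖`; the other quadrant is its complex conjugate.
-/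

open MeasureTheory Complex Set Filter
open scoped ENNReal NNReal Real Classical

noncomputable section

/-- The open unit disc in `ℂ`. -/
def unitDisc : Set ℂ := Metric.ball 0 1

/-- The moment `ω_n = ∫₀¹ rⁿ dω(r)`. -/
def momNat (ω : Measure ℝ) (n : ℕ) : ℝ := ∫ r, r ^ n ∂ω

/-- The Bergman reproducing kernel `B^ω_z(ζ) = Σ (ζ conj z)ⁿ/(2 ω_{2n+1})`. -/
def bergmanKernel (ω : Measure ℝ) (z ζ : ℂ) : ℂ :=
  ∑' n : ℕ, (ζ * (starRingEnd ℂ) z) ^ n / (2 * (momNat ω (2 * n + 1) : ℂ))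

/-- The measure `ω⊗m` on the unit disc: `d(ω⊗m)(re^{iθ}) = r dω(r) dθ`. -/
def polarMeasure (ω : Measure ℝ) : Measure ℂ :=
  Measure.map (fun p : ℝ × ℝ => (p.1 : ℂ) * Complex.exp ((p.2 : ℂ) * Complex.I))
    ((ω.withDensity fun r => ENNReal.ofReal r).prod
      (volume.restrict (Set.Ico (0 : ℝ) (2 * Real.pi))))

/-- The class `D̂`: `ω̂(r) ≤ C ω̂((1+r)/2)`. -/
def DhatClass (ω : Measure ℝ) : Prop :=
  ∃ C : ℝ≥0, ∀ r : ℝ, 0 ≤ r → r < 1 →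
    ω (Set.Ico r 1) ≤ (C : ℝ≥0∞) * ω (Set.Ico ((1 + r) / 2) 1)

/-- The class `R` of regular measures on `[0,1)`. -/
def RClass (ω : Measure ℝ) : Prop :=
  ∃ C g b : ℝ, 0 < C ∧ 0 < g ∧ g ≤ b ∧
    ∀ r t : ℝ, 0 ≤ r → r ≤ t → t < 1 →
      ENNReal.ofReal (C⁻¹ * ((1 - r) / (1 - t)) ^ g) * ω (Set.Ico t 1) ≤ ω (Set.Ico r 1) ∧
      ω (Set.Ico r 1) ≤ ENNReal.ofReal (C * ((1 - r) / (1 - t)) ^ b) * ω (Set.Ico t 1)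

/-- `ω([a,b]) ≍ ω([a,(a+b)/2]) ≍ ω([(a+b)/2,b])`. -/
def Halving (ω : Measure ℝ) : Prop :=
  ∃ C : ℝ≥0, 0 < C ∧ ∀ a b : ℝ, 0 ≤ a → a ≤ b → b ≤ 1 →
    (ω (Set.Icc a b) ≤ (C : ℝ≥0∞) * ω (Set.Icc a ((a + b) / 2)) ∧
      ω (Set.Icc a ((a + b) / 2)) ≤ (C : ℝ≥0∞) * ω (Set.Icc a b)) ∧
    (ω (Set.Icc a b) ≤ (C : ℝ≥0∞) * ω (Set.Icc ((a + b) / 2) b) ∧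
      ω (Set.Icc ((a + b) / 2) b) ≤ (C : ℝ≥0∞) * ω (Set.Icc a b))

/-- The Carleson square over the arc of normalized length `h` starting at angle `θ₀`. -/
def carlesonSquare (θ₀ h : ℝ) : Set ℂ :=
  {z : ℂ | 1 - h ≤ ‖z‖ ∧ ‖z‖ < 1 ∧
    ∃ θ ∈ Set.Ico θ₀ (θ₀ + 2 * Real.pi * h),
      z = ((‖z‖ : ℝ) : ℂ) * Complex.exp ((θ : ℂ) * Complex.I)}

/-- The top half of the Carleson square. -/
def carlesonTop (θ₀ h : ℝ) : Set ℂ :=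
  {z : ℂ | 1 - h ≤ ‖z‖ ∧ ‖z‖ < 1 - h / 2 ∧
    ∃ θ ∈ Set.Ico θ₀ (θ₀ + 2 * Real.pi * h),
      z = ((‖z‖ : ℝ) : ℂ) * Complex.exp ((θ : ℂ) * Complex.I)}

/-- The Carleson square `S(I^β_{j,m})` over the dyadic arc `I^β_{j,m}`, of
normalized length `2/2^j`. -/
def dyadicSq (β : ℝ) (j m : ℕ) : Set ℂ :=
  carlesonSquare (4 * Real.pi * ((m : ℝ) + β) / 2 ^ j) (2 / 2 ^ j)

/-- The top half `T(I^β_{j,m})`. -/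
def dyadicTop (β : ℝ) (j m : ℕ) : Set ℂ :=
  carlesonTop (4 * Real.pi * ((m : ℝ) + β) / 2 ^ j) (2 / 2 ^ j)

/-- The Bergman projection `P_ω`. -/
def bergmanProj (ω : Measure ℝ) (f : ℂ → ℂ) (z : ℂ) : ℂ :=
  ∫ ζ, f ζ * (starRingEnd ℂ) (bergmanKernel ω z ζ) ∂(polarMeasure ω)

/-- The maximal Bergman projection `P⁺_ω`. -/
def bergmanProjPlus (ω : Measure ℝ) (f : ℂ → ℂ) (z : ℂ) : ℂ :=
  ∫ ζ, f ζ * ((‖bergmanKernel ω z ζ‖ : ℝ) : ℂ) ∂(polarMeasure ω)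

/-- `B^ω_z` admits the representation (*) with exponent `γ ≥ 1` and a positive
measure `ν` supported on `[0,1]`. -/
def KernelRep (ω : Measure ℝ) (γ : ℝ) (ν : Measure ℝ) : Prop :=
  1 ≤ γ ∧ ν (Set.Icc (0 : ℝ) 1)ᶜ = 0 ∧
  ∀ z ∈ unitDisc, ∀ ζ ∈ unitDisc,
    bergmanKernel ω z ζ =
      (1 - (starRingEnd ℂ) z * ζ) ^ (-(γ : ℂ)) *
        ∫ r : ℝ, (1 - (r : ℂ) * ((starRingEnd ℂ) z * ζ))⁻¹ ∂ν

/-- The Bekollé–Bonami characteristic `B_{p,μ}(v)`, a supremum over all Carleson squares. -/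
def BpConst (p : ℝ) (μ : Measure ℂ) (v : ℂ → ℝ) : ℝ≥0∞ :=
  ⨆ (θ₀ : ℝ) (h : ℝ) (_ : 0 < h) (_ : h ≤ 1),
    ((∫⁻ z in carlesonSquare θ₀ h, ENNReal.ofReal (v z) ∂μ) / μ (carlesonSquare θ₀ h)) *
      ((∫⁻ z in carlesonSquare θ₀ h, ENNReal.ofReal (v z ^ (-(1 / (p - 1)))) ∂μ) /
          μ (carlesonSquare θ₀ h)) ^ (p - 1)

/-- An `ω`-weight: positive on the disc and `(ω⊗m)`-integrable. -/
def IsWeight (μ : Measure ℂ) (v : ℂ → ℝ) : Prop :=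
  (∀ z ∈ unitDisc, 0 < v z) ∧ ∫⁻ z, ENNReal.ofReal (v z) ∂μ < ⊤

/-- The weighted maximal function `M_ω`. -/
def maxFn (μ : Measure ℂ) (v : ℂ → ℝ) (z : ℂ) : ℝ≥0∞ :=
  ⨆ (a : ℂ) (r : ℝ) (_ : z ∈ Metric.ball a r),
    (∫⁻ ζ in Metric.ball a r ∩ unitDisc, ENNReal.ofReal (v ζ) ∂μ) /
      μ (Metric.ball a r ∩ unitDisc)

/-- The class `B_{1,ω}`: `M_ω(v) ≤ C v` almost everywhere. -/
def B1Class (μ : Measure ℂ) (v : ℂ → ℝ) : Prop :=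
  ∃ C : ℝ≥0, ∀ᵐ z ∂μ, maxFn μ v z ≤ (C : ℝ≥0∞) * ENNReal.ofReal (v z)

/-- The weighted `L^p` norm `(∫ |f|^p v dμ)^{1/p}`. -/
def lpNorm (μ : Measure ℂ) (p : ℝ) (v : ℂ → ℝ) (f : ℂ → ℂ) : ℝ≥0∞ :=
  (∫⁻ z, (‖f z‖₊ : ℝ≥0∞) ^ p * ENNReal.ofReal (v z) ∂μ) ^ (1 / p)

/-- `Ψ` is essentially decreasing on `(0,2)`. -/
def EssDecreasingOn (Ψ : ℝ → ℝ) : Prop :=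
  ∃ C : ℝ, ∀ s t : ℝ, 0 < s → s ≤ t → t < 2 → Ψ t ≤ C * Ψ s

/-- The kernel `K_Ψ(z,ζ) = Ψ(|1 - conj ζ z|)/|1 - conj ζ z|`. -/
def Kpsi (Ψ : ℝ → ℝ) (z ζ : ℂ) : ℝ :=
  Ψ ‖1 - (starRingEnd ℂ) ζ * z‖ / ‖1 - (starRingEnd ℂ) ζ * z‖

/-- The dyadic kernel `K^β_Ψ(z,ζ) = Σ_{I ∈ D^β} 1_{S(I)}(z) 1_{S(I)}(ζ) Ψ(|I|)/|I|`. -/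
def KpsiDyadic (Ψ : ℝ → ℝ) (β : ℝ) (z ζ : ℂ) : ℝ :=
  ∑' jm : ℕ × ℕ,
    if jm.2 < 2 ^ jm.1 ∧ z ∈ dyadicSq β jm.1 jm.2 ∧ ζ ∈ dyadicSq β jm.1 jm.2 then
      Ψ (2 / 2 ^ jm.1) / (2 / 2 ^ jm.1)
    else 0

/-- The dyadic weighted maximal function `M_{ν,D^β}`. -/
def dyadicMax (ν : Measure ℂ) (β : ℝ) (f : ℂ → ℂ) (z : ℂ) : ℝ≥0∞ :=
  ⨆ (jm : ℕ × ℕ) (_ : jm.2 < 2 ^ jm.1) (_ : z ∈ dyadicSq β jm.1 jm.2),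
    (∫⁻ ζ in dyadicSq β jm.1 jm.2, (‖f ζ‖₊ : ℝ≥0∞) ∂ν) / ν (dyadicSq β jm.1 jm.2)

/-- The dyadic operator `P^β_{Ψ,μ}(f) = Σ_{I ∈ D^β} ⟨f, 1_{S(I)} Ψ(|I|)/|I|⟩_{L²_μ} 1_{S(I)}`. -/
def dyadicOpPsi (μ : Measure ℂ) (ψ : ℝ → ℝ) (β : ℝ) (f : ℂ → ℂ) (z : ℂ) : ℂ :=
  ∑' jm : ℕ × ℕ,
    if jm.2 < 2 ^ jm.1 ∧ z ∈ dyadicSq β jm.1 jm.2 then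
      ((ψ (2 / 2 ^ jm.1) / (2 / 2 ^ jm.1) : ℝ) : ℂ) * ∫ ζ in dyadicSq β jm.1 jm.2, f ζ ∂μ
    else 0

/-- The maximal operator `P⁺_{Ψ,μ}(f)(z) = ∫ |Ψ(1-conj ζ z)/(1-conj ζ z)| f(ζ) dμ(ζ)`. -/
def PplusPsi (μ : Measure ℂ) (Ψ : ℂ → ℂ) (f : ℂ → ℂ) (z : ℂ) : ℂ :=
  ∫ ζ, ((‖Ψ (1 - (starRingEnd ℂ) ζ * z)‖ /
      ‖1 - (starRingEnd ℂ) ζ * z‖ : ℝ) : ℂ) * f ζ ∂μ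

/-- Euclidean distance between two sets, as an `ℝ≥0∞`-valued infimum. -/
def setEDist (A B : Set ℂ) : ℝ≥0∞ := ⨅ a ∈ A, ⨅ b ∈ B, edist a b

/-- The polar rectangle `{re^{iθ} : r ∈ [r₁,r₂), θ ∈ [θ₁,θ₂)}`. -/
def polarRect (r₁ r₂ θ₁ θ₂ : ℝ) : Set ℂ :=
  {z : ℂ | ∃ r θ : ℝ, r ∈ Set.Ico r₁ r₂ ∧ θ ∈ Set.Ico θ₁ θ₂ ∧
    z = (r : ℂ) * Complex.exp ((θ : ℂ) * Complex.I)}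

/-- The generation-`k` dyadic polar subrectangle, with indices `i, l < 2^k`, of the
Carleson square over the half-circle starting at angle `θ₀`. -/
def dyadicPolarRect (θ₀ : ℝ) (k i l : ℕ) : Set ℂ :=
  polarRect (1 / 2 + (i : ℝ) / 2 ^ (k + 1)) (1 / 2 + ((i : ℝ) + 1) / 2 ^ (k + 1))
    (θ₀ + (l : ℝ) * Real.pi / 2 ^ k) (θ₀ + ((l : ℝ) + 1) * Real.pi / 2 ^ k)

/-- The dyadic positive operator `T(f) = Σ_{I ∈ D^β} τ_{S(I)} (E^μ_{S(I)} f) 1_{S(I)}`. -/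
def dyadicPosOp (μ : Measure ℂ) (β : ℝ) (τ : ℕ × ℕ → ℝ) (f : ℂ → ℂ) (z : ℂ) : ℂ :=
  ∑' jm : ℕ × ℕ,
    if jm.2 < 2 ^ jm.1 ∧ z ∈ dyadicSq β jm.1 jm.2 then
      ((τ jm / (μ (dyadicSq β jm.1 jm.2)).toReal : ℝ) : ℂ) *
        ∫ ζ in dyadicSq β jm.1 jm.2, f ζ ∂μ
    else 0

namespace Complex

theorem re_add_im_le_sqrt_two_mul_norm (w : ℂ) : w.re + w.im ≤ √2 * ‖w‖ := by
  rw [norm_def, ← Real.sqrt_mul zero_le_two]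
  refine (le_abs_self _).trans (Real.abs_le_sqrt ?_)
  rw [normSq_apply]
  nlinarith [sq_nonneg (w.re - w.im)]

theorem re_inv_one_sub_ofReal_mul_nonneg {r : ℝ} (hr : r ∈ Icc (0 : ℝ) 1) {z : ℂ}
    (hz : ‖z‖ ≤ 1) : 0 ≤ (1 - (r : ℂ) * z)⁻¹.re := by
  have hrz : r * z.re ≤ 1 := by
    nlinarith [hr.1, hr.2, (le_abs_self z.re).trans ((abs_re_le_norm z).trans hz)]
  rw [inv_re]
  exact div_nonneg (by simpa using hrz) (normSq_nonneg _)

theorem im_inv_one_sub_ofReal_mul (r : ℝ) (z : ℂ) :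
    (1 - (r : ℂ) * z)⁻¹.im = r * z.im / normSq (1 - (r : ℂ) * z) := by
  simp [inv_im]

theorem one_sub_norm_le_norm_one_sub_ofReal_mul {r : ℝ} (hr : r ∈ Icc (0 : ℝ) 1) (z : ℂ) :
    1 - ‖z‖ ≤ ‖1 - (r : ℂ) * z‖ := calc
  1 - ‖z‖ ≤ 1 - ‖(r : ℂ) * z‖ := by
    rw [norm_mul, norm_real, Real.norm_of_nonneg hr.1]
    nlinarith [norm_nonneg z, hr.2]
  _ ≤ ‖1 - (r : ℂ) * z‖ := by simpa using norm_sub_norm_le (1 : ℂ) ((r : ℂ) * z)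

end Complex

open ComplexConjugate

section QuadrantIntegral

variable {α : Type*} [MeasurableSpace α] {μ : Measure α} {f : α → ℂ}

theorem integral_norm_le_sqrt_two_mul_norm_integral_of_re_nonneg_of_im_nonneg
    (hf : Integrable f μ) (hre : ∀ᵐ x ∂μ, 0 ≤ (f x).re) (him : ∀ᵐ x ∂μ, 0 ≤ (f x).im) :
    ∫ x, ‖f x‖ ∂μ ≤ √2 * ‖∫ x, f x ∂μ‖ := calc
  ∫ x, ‖f x‖ ∂μ ≤ ∫ x, ((f x).re + (f x).im) ∂μ := by
    refine integral_mono_ae hf.norm (hf.re.add hf.im) ?_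
    filter_upwards [hre, him] with x hxre hxim
    simpa [abs_of_nonneg hxre, abs_of_nonneg hxim] using norm_le_abs_re_add_abs_im (f x)
  _ = (∫ x, f x ∂μ).re + (∫ x, f x ∂μ).im :=
    (integral_add hf.re hf.im).trans (congrArg₂ (· + ·) (integral_re hf) (integral_im hf))
  _ ≤ √2 * ‖∫ x, f x ∂μ‖ := re_add_im_le_sqrt_two_mul_norm _

theorem integral_norm_le_sqrt_two_mul_norm_integral_of_re_nonneg_of_im_nonpos
    (hf : Integrable f μ) (hre : ∀ᵐ x ∂μ, 0 ≤ (f x).re) (him : ∀ᵐ x ∂μ, (f x).im ≤ 0) :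
    ∫ x, ‖f x‖ ∂μ ≤ √2 * ‖∫ x, f x ∂μ‖ := by
  have h := integral_norm_le_sqrt_two_mul_norm_integral_of_re_nonneg_of_im_nonneg
    (f := fun x => conj (f x)) (conjLIE.integrable_comp_iff.mpr hf) (by simpa using hre)
    (by simpa using him)
  simpa [integral_conj] using h

end QuadrantIntegral

theorem integrable_inv_one_sub_ofReal_mul {ν : Measure ℝ} [IsFiniteMeasure ν]
    (hν : ∀ᵐ r ∂ν, r ∈ Icc (0 : ℝ) 1) {z : ℂ} (hz : ‖z‖ < 1) :
    Integrable (fun r : ℝ => (1 - (r : ℂ) * z)⁻¹) ν := by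
  refine Integrable.mono' (integrable_const (1 - ‖z‖)⁻¹) (by fun_prop) ?_
  filter_upwards [hν] with r hr
  rw [norm_inv]
  exact inv_anti₀ (sub_pos.mpr hz) (one_sub_norm_le_norm_one_sub_ofReal_mul hr z)

/-- inequality (4): `|∫₀¹ dν(r)/(1-rz)| ≥ (1/√2) ∫₀¹ dν(r)/|1-rz|`
for all `z` in the unit disc. -/
theorem nu_integral_modulus_lower_bound
    (ν : Measure ℝ) [IsFiniteMeasure ν] (hsupp : ν (Set.Icc (0 : ℝ) 1)ᶜ = 0) :
    ∀ z ∈ unitDisc,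
      (Real.sqrt 2)⁻¹ * ∫ r : ℝ, (‖1 - (r : ℂ) * z‖)⁻¹ ∂ν ≤
        ‖∫ r : ℝ, (1 - (r : ℂ) * z)⁻¹ ∂ν‖ := by
  intro z hz
  rw [unitDisc, mem_ball_zero_iff] at hz
  have hν : ∀ᵐ r ∂ν, r ∈ Icc (0 : ℝ) 1 := mem_ae_iff.mpr hsupp
  have hint := integrable_inv_one_sub_ofReal_mul hν hz
  have hre : ∀ᵐ r : ℝ ∂ν, 0 ≤ (1 - (r : ℂ) * z)⁻¹.re :=
    hν.mono fun r hr => re_inv_one_sub_ofReal_mul_nonneg hr hz.le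
  simp_rw [← norm_inv]
  rw [inv_mul_le_iff₀ (by positivity)]
  rcases le_total 0 z.im with him | him
  · refine integral_norm_le_sqrt_two_mul_norm_integral_of_re_nonneg_of_im_nonneg hint hre ?_
    filter_upwards [hν] with r hr
    rw [im_inv_one_sub_ofReal_mul]
    exact div_nonneg (mul_nonneg hr.1 him) (normSq_nonneg _)
  · refine integral_norm_le_sqrt_two_mul_norm_integral_of_re_nonneg_of_im_nonpos hint hre ?_
    filter_upwards [hν] with r hr
    rw [im_inv_one_sub_ofReal_mul]
    exact div_nonpos_of_nonpos_of_nonneg (mul_nonpos_of_nonneg_of_nonpos hr.1 him)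
      (normSq_nonneg _)

end
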